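/- (Single-variable decision procedure, correctness of SMT-to-BFA.) Let φ be a single-variable regular-membership formula over alphabet α, and let B(φ) be the Boolean finite automaton defined by structural recursion: atoms 'x ∈ L' are translated to the NFA-to-BFA translation of an NFA recognizing L, conjunctions to BFA intersections, disjunctions to BFA unions, and negations to BFA complements. Then for every word x : List α, x satisfies φ if and only if x is accepted by B(φ). -/

import Mathlib

/-- A Boolean finite automaton over alphabet `α` with state type `Q`. -/
structure BFA (α : Type) (Q : Type) where
  I : (Q → Prop) → Prop
  F : Q → Prop
  δ : Q → α → (Q → Prop) → Prop

/-- A word `w` is accepted by the BFA `B` iff, after substituting transitions for states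
symbol by symbol starting from the initial Boolean function, the resulting Boolean function
holds on the final assignment. -/
def BFA.Accepts {α Q : Type} (B : BFA α Q) (w : List α) : Prop :=
  (List.foldl (fun G a => fun v => G (fun q => B.δ q a v)) B.I w) B.F

/-- BFA union: disjoint union of states, disjunction of initial functions. -/
def BFA.union {α Q₁ Q₂ : Type} (B₁ : BFA α Q₁) (B₂ : BFA α Q₂) : BFA α (Q₁ ⊕ Q₂) :=
  { I := fun v => B₁.I (v ∘ Sum.inl) ∨ B₂.I (v ∘ Sum.inr)
    F := Sum.elim B₁.F B₂.F
    δ := fun q a v =>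
      match q with
      | Sum.inl q => B₁.δ q a (v ∘ Sum.inl)
      | Sum.inr q => B₂.δ q a (v ∘ Sum.inr) }

/-- BFA intersection: disjoint union of states, conjunction of initial functions. -/
def BFA.inter {α Q₁ Q₂ : Type} (B₁ : BFA α Q₁) (B₂ : BFA α Q₂) : BFA α (Q₁ ⊕ Q₂) :=
  { I := fun v => B₁.I (v ∘ Sum.inl) ∧ B₂.I (v ∘ Sum.inr)
    F := Sum.elim B₁.F B₂.F
    δ := fun q a v =>
      match q with
      | Sum.inl q => B₁.δ q a (v ∘ Sum.inl)
      | Sum.inr q => B₂.δ q a (v ∘ Sum.inr) }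

/-- BFA complement: negate the initial function. -/
def BFA.compl {α Q : Type} (B : BFA α Q) : BFA α Q :=
  { I := fun v => ¬ B.I v
    F := B.F
    δ := B.δ }

/-- The NFA-to-BFA translation. -/
def NFA.toBFA {α Q : Type} (M : NFA α Q) : BFA α Q :=
  { I := fun v => ∃ q ∈ M.start, v q
    F := fun q => q ∈ M.accept
    δ := fun q a v => ∃ q' ∈ M.step q a, v q' }

/-- Single-variable regular-membership formulas over alphabet `α`:
conjunction, disjunction, negation, and atoms `x ∈ L` where the regular
language `L` is presented by an NFA. -/
inductive RegFormula (α : Type) : Type 1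
  | atom : (σ : Type) → NFA α σ → RegFormula α
  | and : RegFormula α → RegFormula α → RegFormula α
  | or : RegFormula α → RegFormula α → RegFormula α
  | not : RegFormula α → RegFormula α

/-- Satisfaction of a single-variable regular-membership formula by a word `x`,
with the evident Boolean semantics and `x ∈ L` interpreted as language membership. -/
def RegFormula.Sat {α : Type} (x : List α) : RegFormula α → Prop
  | atom _ M => x ∈ M.accepts
  | and φ ψ => φ.Sat x ∧ ψ.Sat x
  | or φ ψ => φ.Sat x ∨ ψ.Sat x
  | not φ => ¬ φ.Sat x

/-- The SMT-to-BFA translation: atoms via NFA-to-BFA, conjunctions via BFA intersection,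
disjunctions via BFA union, negations via BFA complement. -/
def RegFormula.toBFA {α : Type} : RegFormula α → (Q : Type) × BFA α Q
  | atom σ M => ⟨σ, M.toBFA⟩
  | and φ ψ => ⟨_, BFA.inter φ.toBFA.2 ψ.toBFA.2⟩
  | or φ ψ => ⟨_, BFA.union φ.toBFA.2 ψ.toBFA.2⟩
  | not φ => ⟨_, BFA.compl φ.toBFA.2⟩

/-!
Acceptance of a BFA is evaluation of its initial Boolean function at the assignment
"from this state the rest of the word is accepted", obtained by pushing the final assignment
backwards through the transitions. Intersection, union and complement only combine the initial
functions, and their transitions act on each summand separately, so these backward assignments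
restrict to those of the components; for an NFA the backward assignment of a state says that some
run from it ends in an accepting state. Induction on the formula then finishes the proof.
-/

namespace BFA

variable {α Q Q₁ Q₂ : Type}

/-- `B.evalFrom w v q` holds when, reading `w` from state `q`, the assignment `v` is satisfied
at the end. -/
def evalFrom (B : BFA α Q) (w : List α) (v : Q → Prop) : Q → Prop :=
  w.foldr (fun a v q => B.δ q a v) v

theorem foldl_subst_eq (B : BFA α Q) (w : List α) (G : (Q → Prop) → Prop) :
    w.foldl (fun G a => fun v => G (fun q => B.δ q a v)) G = fun v => G (B.evalFrom w v) := by
  induction w generalizing G with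
  | nil => rfl
  | cons a w ih => exact ih _

theorem accepts_iff (B : BFA α Q) (w : List α) : B.Accepts w ↔ B.I (B.evalFrom w B.F) := by
  rw [Accepts, foldl_subst_eq]

theorem evalFrom_inter_comp_inl (B₁ : BFA α Q₁) (B₂ : BFA α Q₂) (w : List α)
    (v : Q₁ ⊕ Q₂ → Prop) :
    (B₁.inter B₂).evalFrom w v ∘ Sum.inl = B₁.evalFrom w (v ∘ Sum.inl) := by
  induction w with
  | nil => rfl
  | cons a w ih => exact congrArg (fun u q => B₁.δ q a u) ih

theorem evalFrom_inter_comp_inr (B₁ : BFA α Q₁) (B₂ : BFA α Q₂) (w : List α)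
    (v : Q₁ ⊕ Q₂ → Prop) :
    (B₁.inter B₂).evalFrom w v ∘ Sum.inr = B₂.evalFrom w (v ∘ Sum.inr) := by
  induction w with
  | nil => rfl
  | cons a w ih => exact congrArg (fun u q => B₂.δ q a u) ih

theorem accepts_inter (B₁ : BFA α Q₁) (B₂ : BFA α Q₂) (w : List α) :
    (B₁.inter B₂).Accepts w ↔ B₁.Accepts w ∧ B₂.Accepts w := by
  rw [accepts_iff, accepts_iff, accepts_iff]
  show B₁.I ((B₁.inter B₂).evalFrom w (Sum.elim B₁.F B₂.F) ∘ Sum.inl) ∧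
    B₂.I ((B₁.inter B₂).evalFrom w (Sum.elim B₁.F B₂.F) ∘ Sum.inr) ↔ _
  rw [evalFrom_inter_comp_inl, evalFrom_inter_comp_inr, Sum.elim_comp_inl, Sum.elim_comp_inr]

theorem accepts_union (B₁ : BFA α Q₁) (B₂ : BFA α Q₂) (w : List α) :
    (B₁.union B₂).Accepts w ↔ B₁.Accepts w ∨ B₂.Accepts w := by
  rw [accepts_iff, accepts_iff, accepts_iff]
  -- `union` has the same transitions as `inter`
  show B₁.I ((B₁.inter B₂).evalFrom w (Sum.elim B₁.F B₂.F) ∘ Sum.inl) ∨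
    B₂.I ((B₁.inter B₂).evalFrom w (Sum.elim B₁.F B₂.F) ∘ Sum.inr) ↔ _
  rw [evalFrom_inter_comp_inl, evalFrom_inter_comp_inr, Sum.elim_comp_inl, Sum.elim_comp_inr]

theorem accepts_compl (B : BFA α Q) (w : List α) : B.compl.Accepts w ↔ ¬ B.Accepts w := by
  rw [accepts_iff, accepts_iff]
  rfl

end BFA

namespace NFA

variable {α σ : Type}

theorem exists_mem_toBFA_evalFrom_iff (M : NFA α σ) (S : Set σ) (w : List α) (v : σ → Prop) :
    (∃ q ∈ S, M.toBFA.evalFrom w v q) ↔ ∃ q ∈ M.evalFrom S w, v q := by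
  induction w generalizing S with
  | nil => rfl
  | cons a w ih =>
    rw [evalFrom_cons, ← ih]
    simp only [BFA.evalFrom, List.foldr_cons, toBFA, mem_stepSet]
    constructor
    · rintro ⟨q, hq, q', hq', hv⟩
      exact ⟨q', ⟨q, hq, hq'⟩, hv⟩
    · rintro ⟨q', ⟨q, hq, hq'⟩, hv⟩
      exact ⟨q, hq, q', hq', hv⟩

theorem toBFA_accepts_iff (M : NFA α σ) (w : List α) : M.toBFA.Accepts w ↔ w ∈ M.accepts := by
  rw [BFA.accepts_iff, mem_accepts]
  refine (M.exists_mem_toBFA_evalFrom_iff M.start w (· ∈ M.accept)).trans ?_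
  simp only [and_comm]

end NFA

/-- Correctness of SMT-to-BFA: a word satisfies a single-variable regular-membership formula
iff it is accepted by the Boolean finite automaton produced from the formula. -/
theorem RegFormula.sat_iff_toBFA_accepts {α : Type} (φ : RegFormula α) (x : List α) :
    φ.Sat x ↔ φ.toBFA.2.Accepts x := by
  induction φ with
  | atom σ M => exact (M.toBFA_accepts_iff x).symm
  | and φ ψ ihφ ihψ => exact (and_congr ihφ ihψ).trans (BFA.accepts_inter _ _ x).symm
  | or φ ψ ihφ ihψ => exact (or_congr ihφ ihψ).trans (BFA.accepts_union _ _ x).symm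
  | not φ ih => exact (not_congr ih).trans (BFA.accepts_compl _ x).symm
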